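/- arXiv:2502.18892 — 2 statements merged into one kernel-verified Lean document; each statement's English description precedes it below -/
import Mathlib

section
/- In the small CM setup, let g₁, g₂ be invertible rational 2×2 matrices with det g₁ = det g₂. Then g₁·w̃ = w̃·g₂ and g₁·conj(w̃) = conj(w̃)·g₂ hold if and only if there exists a nonzero r ∈ ℚ(√D₀) with g₁ = ι_{z₁}(r) and g₂ = ι_{z₂}(r). (Lemma 2.6 of the paper: GSpin(U) is the image of the torus T = k_Dˣ under ι_Z = (ι_{z₁}, ι_{z₂}).) -/
/-!
Both sides of `w̃ = (1/d)·(z₁, 1)ᵗ(1, −z̄₂)` are rank one, so `g₁ w̃ = w̃ g₂` says exactly that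
`(z₁, 1)ᵗ` is a right eigenvector of `g₁` and `(1, −z̄₂)` a left eigenvector of `g₂`, with a common
eigenvalue `r`. For a `2 × 2` matrix, `(1, −w)` is a left eigenvector for `r` iff `(w, 1)ᵗ` is a
right eigenvector for `tr − r`; since `g₂` is real and `z₂ ≠ z̄₂`, its eigenvalues on `(z₂, 1)ᵗ`
and `(z̄₂, 1)ᵗ` are then `r` and `r̄`. The second identity is the complex conjugate of the first.
Finally `r = (g₁)₁₀ z₁ + (g₁)₁₁ ∈ ℚ(√D₀)`, and `r ≠ 0` because `g₁` is invertible.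
-/

open Matrix Complex ComplexConjugate

/-- `√D₀ := i·√|D₀|`. -/
noncomputable def sd (D₀ : ℤ) : ℂ := Complex.I * Real.sqrt (D₀.natAbs)

/-- The matrix `w_d(z₁,z₂) = (1/d)·[[z₁, −z₁z₂],[1, −z₂]]`. -/
noncomputable def wMat (d : ℕ) (z₁ z₂ : ℂ) : Matrix (Fin 2) (Fin 2) ℂ :=
  ((d : ℂ))⁻¹ • !![z₁, -z₁ * z₂; 1, -z₂]

/-- Entrywise complex conjugation of a matrix. -/
noncomputable def matConj (m : Matrix (Fin 2) (Fin 2) ℂ) : Matrix (Fin 2) (Fin 2) ℂ :=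
  m.map (starRingEnd ℂ)

namespace Matrix

section Field

variable {K : Type*} [Field K] {m n : Type*}

theorem exists_smul_of_vecMulVec_eq_vecMulVec {a u : m → K} {ℓ b : n → K} (hu : u ≠ 0)
    (hℓ : ℓ ≠ 0) (h : vecMulVec a ℓ = vecMulVec u b) : ∃ r : K, a = r • u ∧ b = r • ℓ := by
  obtain ⟨i, hi⟩ : ∃ i, u i ≠ 0 := Function.ne_iff.mp hu
  obtain ⟨j, hj⟩ : ∃ j, ℓ j ≠ 0 := Function.ne_iff.mp hℓ
  have hab (k : m) (l : n) : a k * ℓ l = u k * b l := congr($h k l)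
  refine ⟨b j / ℓ j, funext fun k => ?_, funext fun l => ?_⟩
  · simp only [Pi.smul_apply, smul_eq_mul]
    field_simp
    linear_combination hab k j
  · simp only [Pi.smul_apply, smul_eq_mul]
    field_simp
    apply mul_left_cancel₀ hi
    linear_combination ℓ l * hab i j - ℓ j * hab i l

theorem mul_vecMulVec_eq_vecMulVec_mul_iff [Fintype n] {A B : Matrix n n K} {u ℓ : n → K}
    (hu : u ≠ 0) (hℓ : ℓ ≠ 0) :
    A * vecMulVec u ℓ = vecMulVec u ℓ * B ↔ ∃ r : K, A *ᵥ u = r • u ∧ ℓ ᵥ* B = r • ℓ := by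
  rw [mul_vecMulVec, vecMulVec_mul]
  refine ⟨exists_smul_of_vecMulVec_eq_vecMulVec hu hℓ, ?_⟩
  rintro ⟨r, hA, hB⟩
  rw [hA, hB, smul_vecMulVec, vecMulVec_smul]

theorem mul_smul_eq_smul_mul_iff [Fintype n] {c : K} (hc : c ≠ 0) {A B M : Matrix n n K} :
    A * (c • M) = (c • M) * B ↔ A * M = M * B := by
  rw [Matrix.mul_smul, Matrix.smul_mul, smul_right_inj hc]

theorem ne_zero_of_mulVec_eq_smul [Fintype n] [DecidableEq n] {A : Matrix n n K}
    (hA : IsUnit A) {x : n → K} (hx : x ≠ 0) {r : K} (h : A *ᵥ x = r • x) : r ≠ 0 := by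
  rintro rfl
  rw [zero_smul] at h
  exact ((isUnit_iff_isUnit_det A).mp hA).ne_zero (exists_mulVec_eq_zero_iff.mp ⟨x, hx, h⟩)

end Field

section RingHom

variable {R S : Type*} [CommSemiring R] [CommSemiring S] {n : Type*} [Fintype n]

theorem map_mulVec_eq_smul (f : R →+* S) {A : Matrix n n R} {x : n → R} {r : R}
    (h : A *ᵥ x = r • x) : A.map f *ᵥ (f ∘ x) = f r • (f ∘ x) := by
  ext i
  rw [← RingHom.map_mulVec, h]
  simp

theorem map_vecMul_eq_smul (f : R →+* S) {A : Matrix n n R} {x : n → R} {r : R}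
    (h : x ᵥ* A = r • x) : (f ∘ x) ᵥ* A.map f = f r • (f ∘ x) := by
  ext i
  rw [← RingHom.map_vecMul, h]
  simp

end RingHom

theorem comp_vec2 {α β : Type*} (f : α → β) (a b : α) : f ∘ ![a, b] = ![f a, f b] :=
  (FinVec.map_eq f _).symm

section TwoByTwo

theorem vecMul_eq_smul_iff_mulVec_eq_trace_sub_smul {R : Type*} [CommRing R]
    (B : Matrix (Fin 2) (Fin 2) R) (w r : R) :
    ![1, -w] ᵥ* B = r • ![1, -w] ↔ B *ᵥ ![w, 1] = (B.trace - r) • ![w, 1] := by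
  simp only [funext_iff, Fin.forall_fin_two, vecMul, mulVec, dotProduct, Fin.sum_univ_two,
    trace_fin_two, cons_val_zero, cons_val_one, cons_val_fin_one, Pi.smul_apply, smul_eq_mul,
    one_mul, mul_one, neg_mul, mul_neg]
  constructor <;> rintro ⟨h₀, h₁⟩
  · exact ⟨by linear_combination h₁, by linear_combination -h₀⟩
  · exact ⟨by linear_combination -h₁, by linear_combination h₀⟩

variable {K : Type*} [Field K] {B : Matrix (Fin 2) (Fin 2) K} {z z' r s : K}

theorem trace_eq_add_of_mulVec_eq_smul (hz : z ≠ z') (h : B *ᵥ ![z, 1] = r • ![z, 1])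
    (h' : B *ᵥ ![z', 1] = s • ![z', 1]) : B.trace = r + s := by
  simp only [funext_iff, Fin.forall_fin_two, mulVec, dotProduct, Fin.sum_univ_two,
    cons_val_zero, cons_val_one, cons_val_fin_one, Pi.smul_apply, smul_eq_mul, mul_one] at h h'
  obtain ⟨h₀, h₁⟩ := h
  obtain ⟨h₀', h₁'⟩ := h'
  apply mul_left_cancel₀ (sub_ne_zero.mpr hz)
  rw [trace_fin_two]
  linear_combination h₀ - h₀' + (z - z') * h₁ - z * h₁ + z * h₁'

theorem vecMul_eq_smul_iff_mulVec_eq_smul (hz : z ≠ z') :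
    (![1, -z'] ᵥ* B = r • ![1, -z'] ∧ ![1, -z] ᵥ* B = s • ![1, -z]) ↔
      (B *ᵥ ![z, 1] = r • ![z, 1] ∧ B *ᵥ ![z', 1] = s • ![z', 1]) := by
  simp only [vecMul_eq_smul_iff_mulVec_eq_trace_sub_smul]
  constructor
  · rintro ⟨h', h⟩
    have htr := trace_eq_add_of_mulVec_eq_smul hz h h'
    exact ⟨by rwa [show B.trace - s = r by linear_combination -htr] at h,
      by rwa [show B.trace - r = s by linear_combination -htr] at h'⟩
  · rintro ⟨h, h'⟩
    have htr := trace_eq_add_of_mulVec_eq_smul hz h h'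
    rw [show B.trace - s = r by linear_combination htr,
      show B.trace - r = s by linear_combination htr]
    exact ⟨h', h⟩

end TwoByTwo

section Conj

variable {A : Matrix (Fin 2) (Fin 2) ℂ} {z r : ℂ}

theorem mulVec_conj_eq_conj_smul (hA : A.map conj = A) (h : A *ᵥ ![z, 1] = r • ![z, 1]) :
    A *ᵥ ![conj z, 1] = conj r • ![conj z, 1] := by
  simpa [hA, comp_vec2] using map_mulVec_eq_smul (starRingEnd ℂ) h

theorem vecMul_conj_eq_conj_smul (hA : A.map conj = A) (h : ![1, -z] ᵥ* A = r • ![1, -z]) :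
    ![1, -conj z] ᵥ* A = conj r • ![1, -conj z] := by
  simpa [hA, comp_vec2] using map_vecMul_eq_smul (starRingEnd ℂ) h

theorem vecMul_eq_smul_iff_mulVec_eq_smul_of_map_conj (hA : A.map conj = A)
    (hz : z ≠ conj z) : ![1, -conj z] ᵥ* A = r • ![1, -conj z] ↔
      A *ᵥ ![z, 1] = r • ![z, 1] ∧ A *ᵥ ![conj z, 1] = conj r • ![conj z, 1] := by
  rw [← vecMul_eq_smul_iff_mulVec_eq_smul hz]
  exact ⟨fun h => ⟨h, by simpa using vecMul_conj_eq_conj_smul hA h⟩, And.left⟩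

theorem map_ratCast_map_conj {m n : Type*} (g : Matrix m n ℚ) :
    (g.map fun q : ℚ => (q : ℂ)).map conj = g.map fun q : ℚ => (q : ℂ) := by
  ext
  simp

end Conj

end Matrix

theorem mul_matConj_eq_matConj_mul_iff {A B : Matrix (Fin 2) (Fin 2) ℂ} (hA : A.map conj = A)
    (hB : B.map conj = B) (W : Matrix (Fin 2) (Fin 2) ℂ) :
    A * matConj W = matConj W * B ↔ A * W = W * B := by
  rw [← (map_injective (starRingEnd ℂ).injective).eq_iff (a := A * W), Matrix.map_mul,
    Matrix.map_mul, hA, hB]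
  rfl

theorem wMat_eq_smul_vecMulVec (d : ℕ) (z₁ z₂ : ℂ) :
    wMat d z₁ z₂ = (d : ℂ)⁻¹ • vecMulVec ![z₁, 1] ![1, -z₂] := by
  rw [wMat]
  congr 1
  ext i j
  fin_cases i <;> fin_cases j <;> simp [vecMulVec_apply]

theorem im_add_mul_sd_div_pos {D₀ : ℤ} (hD₀ : D₀ < 0) (b : ℤ) {t a : ℕ} (ht : 0 < t)
    (ha : 0 < a) :
    0 < (((b : ℂ) + (t : ℂ) * sd D₀) / (2 * (a : ℂ))).im := by
  have hden : (2 * (a : ℂ)) = ((2 * a : ℕ) : ℂ) := by push_cast; rfl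
  have him : ((b : ℂ) + (t : ℂ) * sd D₀).im = t * √|(D₀ : ℝ)| := by simp [sd]
  have hD : 0 < √|(D₀ : ℝ)| := Real.sqrt_pos.mpr (abs_pos.mpr (by exact_mod_cast hD₀.ne))
  rw [hden, div_natCast_im, him]
  positivity

theorem exists_rat_add_mul_sd_eq (D₀ b : ℤ) (t a : ℕ) (p q : ℚ) :
    ∃ x y : ℚ, (p : ℂ) * (((b : ℂ) + (t : ℂ) * sd D₀) / (2 * (a : ℂ))) + q = x + y * sd D₀ :=
  ⟨q + p * b / (2 * a), p * t / (2 * a), by push_cast; ring⟩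

theorem stmt_6_general (D₀ : ℤ) (hD₀ : D₀ < 0) (t₁ t₂ a₁ a₂ d : ℕ)
    (ht₂ : 0 < t₂) (ha₂ : 0 < a₂) (hd : 0 < d)
    (b₁ b₂ : ℤ) (z₁ z₂ : ℂ)
    (hz₁ : z₁ = ((b₁ : ℂ) + (t₁ : ℂ) * sd D₀) / (2 * (a₁ : ℂ)))
    (hz₂ : z₂ = ((b₂ : ℂ) + (t₂ : ℂ) * sd D₀) / (2 * (a₂ : ℂ)))
    (g₁ g₂ : Matrix (Fin 2) (Fin 2) ℚ) (hu₁ : IsUnit g₁) :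
    ((g₁.map fun q : ℚ => (q : ℂ)) * wMat d z₁ (conj z₂) =
        wMat d z₁ (conj z₂) * (g₂.map fun q : ℚ => (q : ℂ)) ∧
      (g₁.map fun q : ℚ => (q : ℂ)) * matConj (wMat d z₁ (conj z₂)) =
        matConj (wMat d z₁ (conj z₂)) * (g₂.map fun q : ℚ => (q : ℂ))) ↔
    (∃ r : ℂ, r ≠ 0 ∧ (∃ x y : ℚ, r = (x : ℂ) + (y : ℂ) * sd D₀) ∧
      (g₁.map fun q : ℚ => (q : ℂ)).mulVec ![z₁, 1] = r • ![z₁, 1] ∧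
      (g₁.map fun q : ℚ => (q : ℂ)).mulVec ![conj z₁, 1] = conj r • ![conj z₁, 1] ∧
      (g₂.map fun q : ℚ => (q : ℂ)).mulVec ![z₂, 1] = r • ![z₂, 1] ∧
      (g₂.map fun q : ℚ => (q : ℂ)).mulVec ![conj z₂, 1] = conj r • ![conj z₂, 1]) := by
  have hG₁ := map_ratCast_map_conj g₁
  have hG₂ := map_ratCast_map_conj g₂
  have hz₂_ne : z₂ ≠ conj z₂ := fun h =>
    (im_add_mul_sd_div_pos hD₀ b₂ ht₂ ha₂).ne' (hz₂ ▸ conj_eq_iff_im.mp h.symm)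
  rw [mul_matConj_eq_matConj_mul_iff hG₁ hG₂, and_self, wMat_eq_smul_vecMulVec,
    mul_smul_eq_smul_mul_iff (inv_ne_zero (Nat.cast_ne_zero.mpr hd.ne')),
    mul_vecMulVec_eq_vecMulVec_mul_iff (by simp) (by simp)]
  refine exists_congr fun r => ?_
  rw [vecMul_eq_smul_iff_mulVec_eq_smul_of_map_conj hG₂ hz₂_ne]
  constructor
  · rintro ⟨h₁, h₂⟩
    have hr : r = (g₁ 1 0 : ℂ) * z₁ + g₁ 1 1 := by simpa using (congrFun h₁ 1).symm
    refine ⟨ne_zero_of_mulVec_eq_smul (hu₁.map (Rat.castHom ℂ).mapMatrix) (by simp) h₁, ?_, h₁,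
      mulVec_conj_eq_conj_smul hG₁ h₁, h₂⟩
    rw [hr, hz₁]
    exact exists_rat_add_mul_sd_eq D₀ b₁ t₁ a₁ (g₁ 1 0) (g₁ 1 1)
  · rintro ⟨-, -, h₁, -, h₂⟩
    exact ⟨h₁, h₂⟩

/-- Lemma 2.6 of the paper: a pair `(g₁,g₂)` of invertible rational matrices with equal
determinants satisfies `g₁w̃ = w̃g₂` and `g₁·conj(w̃) = conj(w̃)·g₂` if and only if
`g₁ = ι_{z₁}(r)` and `g₂ = ι_{z₂}(r)` for some nonzero `r ∈ ℚ(√D₀)`. -/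
theorem stmt_6 (D₀ : ℤ) (hD₀ : D₀ < 0) (t₁ t₂ a₁ a₂ d : ℕ)
    (ht₁ : 0 < t₁) (ht₂ : 0 < t₂) (ha₁ : 0 < a₁) (ha₂ : 0 < a₂) (hd : 0 < d)
    (b₁ b₂ : ℤ) (z₁ z₂ : ℂ)
    (hz₁ : z₁ = ((b₁ : ℂ) + (t₁ : ℂ) * sd D₀) / (2 * (a₁ : ℂ)))
    (hz₂ : z₂ = ((b₂ : ℂ) + (t₂ : ℂ) * sd D₀) / (2 * (a₂ : ℂ)))
    (g₁ g₂ : Matrix (Fin 2) (Fin 2) ℚ) (hu₁ : IsUnit g₁) (hu₂ : IsUnit g₂)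
    (hdet : g₁.det = g₂.det) :
    ((g₁.map fun q : ℚ => (q : ℂ)) * wMat d z₁ (conj z₂) =
        wMat d z₁ (conj z₂) * (g₂.map fun q : ℚ => (q : ℂ)) ∧
      (g₁.map fun q : ℚ => (q : ℂ)) * matConj (wMat d z₁ (conj z₂)) =
        matConj (wMat d z₁ (conj z₂)) * (g₂.map fun q : ℚ => (q : ℂ))) ↔
    (∃ r : ℂ, r ≠ 0 ∧ (∃ x y : ℚ, r = (x : ℂ) + (y : ℂ) * sd D₀) ∧
      (g₁.map fun q : ℚ => (q : ℂ)).mulVec ![z₁, 1] = r • ![z₁, 1] ∧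
      (g₁.map fun q : ℚ => (q : ℂ)).mulVec ![conj z₁, 1] = conj r • ![conj z₁, 1] ∧
      (g₂.map fun q : ℚ => (q : ℂ)).mulVec ![z₂, 1] = r • ![z₂, 1] ∧
      (g₂.map fun q : ℚ => (q : ℂ)).mulVec ![conj z₂, 1] = conj r • ![conj z₂, 1]) :=
  stmt_6_general D₀ hD₀ t₁ t₂ a₁ a₂ d ht₂ ha₂ hd b₁ b₂ z₁ z₂ hz₁ hz₂ g₁ g₂ hu₁
end

section
/- In the small CM setup with the Lemma 2.4 conditions, for every positive integer d and all λ̃, λ ∈ ℚ(√D₀): (i) i_d(λ̃, λ) ∈ L_d' if and only if λ̃ + λ ∈ (1/(d·t₁))·𝔞̄₁ and λ̃·z̄₂ + λ·z₂ ∈ (1/(2d·t₁))·𝔟₁; (ii) i_d(λ̃, λ) ∈ L_d if and only if λ̃ + λ ∈ (1/t₁)·𝔟₁ and λ̃·z̄₂ + λ·z₂ ∈ (1/t₁)·𝔞̄₁. (Equation (2.36) of Proposition 2.9 of the paper.) -/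
set_option maxHeartbeats 1000000

open Matrix Complex ComplexConjugate

/-- `i_d^+(λ) := −(d/√D₀)·(λ·w̃ − conj(λ·w̃))`. -/
noncomputable def iPlus (D₀ : ℤ) (d : ℕ) (z₁ z₂ : ℂ) (lam : ℂ) : Matrix (Fin 2) (Fin 2) ℂ :=
  (-(d : ℂ) / sd D₀) •
    (lam • wMat d z₁ (starRingEnd ℂ z₂) - matConj (lam • wMat d z₁ (starRingEnd ℂ z₂)))

/-- `i_d^−(λ) := −(d/√D₀)·(λ·w − conj(λ·w))`. -/
noncomputable def iMinus (D₀ : ℤ) (d : ℕ) (z₁ z₂ : ℂ) (lam : ℂ) : Matrix (Fin 2) (Fin 2) ℂ :=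
  (-(d : ℂ) / sd D₀) • (lam • wMat d z₁ z₂ - matConj (lam • wMat d z₁ z₂))

/-- The bilinear form `(x,y)_d = d·(det(x+y) − det x − det y)`. -/
noncomputable def Bd (d : ℕ) (x y : Matrix (Fin 2) (Fin 2) ℂ) : ℂ :=
  (d : ℂ) * ((x + y).det - x.det - y.det)

/-- The lattice `L_d`: integer matrices whose lower-left entry is even. -/
def LdSet : Set (Matrix (Fin 2) (Fin 2) ℂ) :=
  {m | (∀ i j, ∃ k : ℤ, m i j = (k : ℂ)) ∧ ∃ k : ℤ, m 1 0 = 2 * (k : ℂ)}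

/-- The dual lattice `L_d' = {x ∈ M₂(ℚ) : (x,y)_d ∈ ℤ for all y ∈ L_d}`. -/
noncomputable def LdDualSet (d : ℕ) : Set (Matrix (Fin 2) (Fin 2) ℂ) :=
  {m | (∀ i j, ∃ q : ℚ, m i j = (q : ℂ)) ∧ ∀ y ∈ LdSet, ∃ k : ℤ, Bd d m y = (k : ℂ)}

/- ### Auxiliary lemmas -/

lemma sd_re (D₀ : ℤ) : (sd D₀).re = 0 := by simp [sd]

lemma sd_ne (D₀ : ℤ) (hneg : D₀ < 0) : sd D₀ ≠ 0 := by
  simp only [sd, ne_eq, mul_eq_zero, Complex.I_ne_zero, false_or]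
  rw [Complex.ofReal_eq_zero]
  have h0 : (0:ℝ) < (D₀.natAbs : ℝ) := by
    have : 0 < D₀.natAbs := by omega
    exact_mod_cast this
  exact ne_of_gt (Real.sqrt_pos.2 h0)

lemma sd_im_ne (D₀ : ℤ) (hneg : D₀ < 0) : (sd D₀).im ≠ 0 := by
  have h0 : (0:ℝ) < (D₀.natAbs : ℝ) := by
    have : 0 < D₀.natAbs := by omega
    exact_mod_cast this
  have : (sd D₀).im = Real.sqrt (D₀.natAbs) := by simp [sd]
  rw [this]
  exact ne_of_gt (Real.sqrt_pos.2 h0)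

lemma sd_conj (D₀ : ℤ) : starRingEnd ℂ (sd D₀) = -(sd D₀) := by simp [sd]

lemma sd_sq (D₀ : ℤ) (hneg : D₀ < 0) : sd D₀ * sd D₀ = (D₀ : ℂ) := by
  have h : (0:ℝ) ≤ (D₀.natAbs : ℝ) := by positivity
  have h1 : (Real.sqrt (D₀.natAbs) : ℂ) * (Real.sqrt (D₀.natAbs) : ℂ) = (D₀.natAbs : ℂ) := by
    rw [← Complex.ofReal_mul, Real.mul_self_sqrt h]; norm_cast
  have hD : ((D₀.natAbs : ℂ)) = -(D₀ : ℂ) := by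
    rw [Nat.cast_natAbs, abs_of_neg hneg]; push_cast; ring
  calc sd D₀ * sd D₀
      = (Complex.I * Complex.I) * ((Real.sqrt (D₀.natAbs) : ℂ) * (Real.sqrt (D₀.natAbs) : ℂ)) := by
        rw [sd]; ring
    _ = (D₀ : ℂ) := by rw [Complex.I_mul_I, h1, hD]; ring

/-- Uniqueness of rational coefficients w.r.t. a purely imaginary nonzero `S`. -/
lemma rat_coeff_unique {S : ℂ} (hre : S.re = 0) (him : S.im ≠ 0) {a b c e : ℚ}
    (h : (a:ℂ) + (b:ℂ) * S = (c:ℂ) + (e:ℂ) * S) : a = c ∧ b = e := by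
  have h1 := congrArg Complex.im h
  have h2 := congrArg Complex.re h
  simp [Complex.add_im, Complex.add_re, Complex.mul_im, Complex.mul_re, hre] at h1 h2
  exact ⟨h2, h1.resolve_right him⟩

lemma exists_int_neg_congr {x y : ℚ} (h : x = -y) : (∃ k : ℤ, x = k) ↔ (∃ k : ℤ, y = k) := by
  constructor <;> rintro ⟨k, hk⟩ <;> exact ⟨-k, by push_cast; linarith [hk, h]⟩

lemma exists_rep_iff {S : ℂ} (hre : S.re = 0) (him : S.im ≠ 0) (b : ℤ) (P Q c₁ c₂ : ℚ)
    (hc₁ : c₁ ≠ 0) (hc₂ : c₂ ≠ 0) :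
    (∃ x y : ℤ, (P:ℂ) + (Q:ℂ)*S = (c₁:ℂ)*(x:ℂ) + (c₂:ℂ)*(y:ℂ)*((b:ℂ) - S)) ↔
      ((∃ k : ℤ, (P + Q*b)/c₁ = k) ∧ (∃ k : ℤ, Q/c₂ = k)) := by
  constructor
  · rintro ⟨x, y, h⟩
    have h' : (P:ℂ) + (Q:ℂ)*S = ((c₁*x + c₂*y*b : ℚ):ℂ) + ((-(c₂*y) : ℚ):ℂ)*S := by
      rw [h]; push_cast; ring
    obtain ⟨h1, h2⟩ := rat_coeff_unique hre him h'
    refine ⟨⟨x, ?_⟩, ⟨-y, ?_⟩⟩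
    · rw [h1, h2]; field_simp; ring
    · rw [h2, Int.cast_neg]; field_simp
  · rintro ⟨⟨k1, h1⟩, ⟨k2, h2⟩⟩
    refine ⟨k1, -k2, ?_⟩
    have h1' : P + Q*(b:ℚ) = k1*c₁ := by
      have := (div_eq_iff hc₁).1 h1; linarith [this]
    have h2' : Q = k2*c₂ := by
      have := (div_eq_iff hc₂).1 h2; linarith [this]
    have h1c : (P:ℂ) + (Q:ℂ)*(b:ℂ) = (k1:ℂ)*(c₁:ℂ) := by exact_mod_cast h1'
    have h2c : (Q:ℂ) = (k2:ℂ)*(c₂:ℂ) := by exact_mod_cast h2'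
    push_cast
    linear_combination h1c + (S - (b:ℂ))*h2c

lemma iSum_entries (D₀ : ℤ) (hS : sd D₀ ≠ 0) (d : ℕ) (hd : 0 < d) (z₁ z₂ lt l : ℂ) :
    iPlus D₀ d z₁ z₂ lt + iMinus D₀ d z₁ z₂ l =
      (sd D₀)⁻¹ • !![ -((lt + l) * z₁ - conj ((lt + l) * z₁)),
          ((lt * conj z₂ + l * z₂) * z₁ - conj ((lt * conj z₂ + l * z₂) * z₁));
          -((lt + l) - conj ((lt + l))),
          ((lt * conj z₂ + l * z₂) - conj ((lt * conj z₂ + l * z₂))) ] := by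
  have hdc : (d : ℂ) ≠ 0 := Nat.cast_ne_zero.2 hd.ne'
  ext i j
  fin_cases i <;> fin_cases j <;>
    · simp [iPlus, iMinus, wMat, matConj, Matrix.smul_apply, Matrix.map_apply,
        Matrix.add_apply, Matrix.sub_apply, _root_.map_mul, map_add, map_sub, div_eq_mul_inv]
      field_simp [hdc, hS]
      ring

lemma M_explicit (D₀ : ℤ) (hS : sd D₀ ≠ 0) (hconj : starRingEnd ℂ (sd D₀) = -(sd D₀))
    (t₁ a₁ : ℕ) (ha : (a₁:ℂ) ≠ 0) (b : ℤ)
    (z₁ : ℂ) (hz₁ : z₁ = (t₁:ℂ)*((b:ℂ)+sd D₀)/(2*(a₁:ℂ)))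
    (d : ℕ) (hd : 0 < d) (z₂ lt l : ℂ)
    (p q u v : ℚ)
    (hν : lt + l = (p:ℂ) + (q:ℂ) * sd D₀)
    (hμ : lt * conj z₂ + l * z₂ = (u:ℂ) + (v:ℂ) * sd D₀) :
    iPlus D₀ d z₁ z₂ lt + iMinus D₀ d z₁ z₂ l =
      !![ (((-((t₁:ℚ)*(p+q*(b:ℚ))/(a₁:ℚ))) : ℚ) : ℂ), ((((t₁:ℚ)*(u+v*(b:ℚ))/(a₁:ℚ)) : ℚ) : ℂ);
          (((-(2*q)) : ℚ) : ℂ), (((2*v) : ℚ) : ℂ) ] := by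
  rw [iSum_entries D₀ hS d hd, hν, hμ, hz₁]
  ext i j
  fin_cases i <;> fin_cases j <;>
    · simp [Matrix.smul_apply, map_add, _root_.map_mul, map_sub, map_div₀, map_neg,
        map_natCast, map_intCast, map_ratCast, map_ofNat, hconj]
      field_simp
      ring

lemma Bd_formula (d : ℕ) (x y : Matrix (Fin 2) (Fin 2) ℂ) :
    Bd d x y = (d:ℂ) * (x 0 0 * y 1 1 + x 1 1 * y 0 0 - x 0 1 * y 1 0 - x 1 0 * y 0 1) := by
  simp only [Bd, Matrix.det_fin_two, Matrix.add_apply]; ring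

lemma mem_LdSet_iff (A B C E : ℚ) :
    (!![(A:ℂ), (B:ℂ); (C:ℂ), (E:ℂ)] ∈ LdSet) ↔
      ((∃ k : ℤ, A = k) ∧ (∃ k : ℤ, B = k) ∧ (∃ k : ℤ, E = k) ∧ (∃ k : ℤ, C = 2*k)) := by
  constructor
  · rintro ⟨h1, k, hk⟩
    refine ⟨?_, ?_, ?_, ⟨k, ?_⟩⟩
    · obtain ⟨k,hk⟩ := h1 0 0; exact ⟨k, by exact_mod_cast (by simpa using hk : (A:ℂ) = (k:ℂ))⟩
    · obtain ⟨k,hk⟩ := h1 0 1; exact ⟨k, by exact_mod_cast (by simpa using hk : (B:ℂ) = (k:ℂ))⟩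
    · obtain ⟨k,hk⟩ := h1 1 1; exact ⟨k, by exact_mod_cast (by simpa using hk : (E:ℂ) = (k:ℂ))⟩
    · simp at hk
      exact_mod_cast hk
  · rintro ⟨⟨kA,hA⟩,⟨kB,hB⟩,⟨kE,hE⟩,⟨kC,hC⟩⟩
    constructor
    · intro i j
      fin_cases i <;> fin_cases j
      · exact ⟨kA, by simp [hA]⟩
      · exact ⟨kB, by simp [hB]⟩
      · exact ⟨2*kC, by rw [show ((2*kC : ℤ):ℂ) = 2*(kC:ℂ) by push_cast; ring]; simp [hC]⟩
      · exact ⟨kE, by simp [hE]⟩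
    · exact ⟨kC, by simp [hC]⟩

lemma mem_LdDual_iff (d : ℕ) (A B C E : ℚ) :
    (!![(A:ℂ), (B:ℂ); (C:ℂ), (E:ℂ)] ∈ LdDualSet d) ↔
      ((∃ k : ℤ, (d:ℚ)*A = k) ∧ (∃ k : ℤ, 2*(d:ℚ)*B = k) ∧
        (∃ k : ℤ, (d:ℚ)*E = k) ∧ (∃ k : ℤ, (d:ℚ)*C = k)) := by
  constructor
  · rintro ⟨-, h⟩
    have m1 : !![(0:ℂ),0;0,1] ∈ LdSet := by
      refine ⟨fun i j => ?_, ⟨0, by norm_num⟩⟩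
      fin_cases i <;> fin_cases j
      · exact ⟨0, by norm_num⟩
      · exact ⟨0, by norm_num⟩
      · exact ⟨0, by norm_num⟩
      · exact ⟨1, by norm_num⟩
    have m2 : !![(1:ℂ),0;0,0] ∈ LdSet := by
      refine ⟨fun i j => ?_, ⟨0, by norm_num⟩⟩
      fin_cases i <;> fin_cases j
      · exact ⟨1, by norm_num⟩
      · exact ⟨0, by norm_num⟩
      · exact ⟨0, by norm_num⟩
      · exact ⟨0, by norm_num⟩
    have m3 : !![(0:ℂ),0;2,0] ∈ LdSet := by
      refine ⟨fun i j => ?_, ⟨1, by norm_num⟩⟩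
      fin_cases i <;> fin_cases j
      · exact ⟨0, by norm_num⟩
      · exact ⟨0, by norm_num⟩
      · exact ⟨2, by norm_num⟩
      · exact ⟨0, by norm_num⟩
    have m4 : !![(0:ℂ),1;0,0] ∈ LdSet := by
      refine ⟨fun i j => ?_, ⟨0, by norm_num⟩⟩
      fin_cases i <;> fin_cases j
      · exact ⟨0, by norm_num⟩
      · exact ⟨1, by norm_num⟩
      · exact ⟨0, by norm_num⟩
      · exact ⟨0, by norm_num⟩
    obtain ⟨k1, hk1⟩ := h _ m1
    obtain ⟨k2, hk2⟩ := h _ m2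
    obtain ⟨k3, hk3⟩ := h _ m3
    obtain ⟨k4, hk4⟩ := h _ m4
    rw [Bd_formula] at hk1 hk2 hk3 hk4
    simp at hk1 hk2 hk3 hk4
    refine ⟨⟨k1, ?_⟩, ⟨-k3, ?_⟩, ⟨k2, ?_⟩, ⟨-k4, ?_⟩⟩
    · exact_mod_cast hk1
    · have : (2*(d:ℂ)*B) = ((-k3 : ℤ):ℂ) := by push_cast; linear_combination -hk3
      exact_mod_cast this
    · exact_mod_cast hk2
    · have : ((d:ℂ)*C) = ((-k4 : ℤ):ℂ) := by push_cast; linear_combination -hk4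
      exact_mod_cast this
  · rintro ⟨⟨kA,hA⟩,⟨kB,hB⟩,⟨kE,hE⟩,⟨kC,hC⟩⟩
    constructor
    · intro i j
      fin_cases i <;> fin_cases j
      · exact ⟨A, by simp⟩
      · exact ⟨B, by simp⟩
      · exact ⟨C, by simp⟩
      · exact ⟨E, by simp⟩
    · rintro y ⟨hy1, ⟨k', hk'⟩⟩
      obtain ⟨k00, h00⟩ := hy1 0 0
      obtain ⟨k01, h01⟩ := hy1 0 1
      obtain ⟨k11, h11⟩ := hy1 1 1
      have hA' : (d:ℂ)*(A:ℂ) = (kA:ℂ) := by exact_mod_cast hA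
      have hB' : 2*(d:ℂ)*(B:ℂ) = (kB:ℂ) := by exact_mod_cast hB
      have hE' : (d:ℂ)*(E:ℂ) = (kE:ℂ) := by exact_mod_cast hE
      have hC' : (d:ℂ)*(C:ℂ) = (kC:ℂ) := by exact_mod_cast hC
      refine ⟨kA*k11 + kE*k00 - kB*k' - kC*k01, ?_⟩
      rw [Bd_formula]
      rw [show (!![(A:ℂ), (B:ℂ); (C:ℂ), (E:ℂ)]) 0 0 = (A:ℂ) by norm_num,
        show (!![(A:ℂ), (B:ℂ); (C:ℂ), (E:ℂ)]) 0 1 = (B:ℂ) by norm_num,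
        show (!![(A:ℂ), (B:ℂ); (C:ℂ), (E:ℂ)]) 1 0 = (C:ℂ) by norm_num,
        show (!![(A:ℂ), (B:ℂ); (C:ℂ), (E:ℂ)]) 1 1 = (E:ℂ) by norm_num,
        h00, h01, h11, hk']
      push_cast
      linear_combination (k11:ℂ)*hA' + (k00:ℂ)*hE' - (k':ℂ)*hB' - (k01:ℂ)*hC'

lemma key_lemma (D₀ : ℤ) (hneg : D₀ < 0) (t₁ a₁ : ℕ) (ht₁ : 0 < t₁) (ha₁ : 0 < a₁) (b : ℤ)
    (z₁ z₂ : ℂ) (hz₁ : z₁ = (t₁ : ℂ) * ((b : ℂ) + sd D₀) / (2 * (a₁ : ℂ)))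
    (d : ℕ) (hd : 0 < d) (lt l : ℂ) (p q u v : ℚ)
    (hν : lt + l = (p:ℂ) + (q:ℂ) * sd D₀)
    (hμ : lt * conj z₂ + l * z₂ = (u:ℂ) + (v:ℂ) * sd D₀) :
    ((iPlus D₀ d z₁ z₂ lt + iMinus D₀ d z₁ z₂ l ∈ LdDualSet d) ↔
      ((∃ x y : ℤ, lt + l = ((a₁ : ℂ) * (x : ℂ) + (a₁ : ℂ) * (y : ℂ) * conj z₁) /
          ((d : ℂ) * (t₁ : ℂ))) ∧
        (∃ x y : ℤ, lt * conj z₂ + l * z₂ =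
          ((a₁ : ℂ) * (x : ℂ) + 2 * (a₁ : ℂ) * (y : ℂ) * conj z₁) /
            (2 * (d : ℂ) * (t₁ : ℂ))))) ∧
    ((iPlus D₀ d z₁ z₂ lt + iMinus D₀ d z₁ z₂ l ∈ LdSet) ↔
      ((∃ x y : ℤ, lt + l = ((a₁ : ℂ) * (x : ℂ) + 2 * (a₁ : ℂ) * (y : ℂ) * conj z₁) /
          (t₁ : ℂ)) ∧
        (∃ x y : ℤ, lt * conj z₂ + l * z₂ =
          ((a₁ : ℂ) * (x : ℂ) + (a₁ : ℂ) * (y : ℂ) * conj z₁) / (t₁ : ℂ)))) := by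
  have hS : sd D₀ ≠ 0 := sd_ne D₀ hneg
  have hre : (sd D₀).re = 0 := sd_re D₀
  have him : (sd D₀).im ≠ 0 := sd_im_ne D₀ hneg
  have hconj : starRingEnd ℂ (sd D₀) = -(sd D₀) := sd_conj D₀
  have ha : (a₁:ℂ) ≠ 0 := Nat.cast_ne_zero.2 ha₁.ne'
  have ht : (t₁:ℂ) ≠ 0 := Nat.cast_ne_zero.2 ht₁.ne'
  have hdC : (d:ℂ) ≠ 0 := Nat.cast_ne_zero.2 hd.ne'
  have haQ : (a₁:ℚ) ≠ 0 := Nat.cast_ne_zero.2 ha₁.ne'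
  have htQ : (t₁:ℚ) ≠ 0 := Nat.cast_ne_zero.2 ht₁.ne'
  have hdQ : (d:ℚ) ≠ 0 := Nat.cast_ne_zero.2 hd.ne'
  have h2Q : (2:ℚ) ≠ 0 := two_ne_zero
  have hz1c : conj z₁ = (t₁:ℂ) * ((b:ℂ) - sd D₀) / (2 * (a₁:ℂ)) := by
    rw [hz₁]
    simp [map_div₀, _root_.map_mul, map_add, map_natCast, map_intCast, map_ofNat, hconj]
    ring
  have hM := M_explicit D₀ hS hconj t₁ a₁ ha b z₁ hz₁ d hd z₂ lt l p q u v hν hμ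
  rw [hM, mem_LdDual_iff, mem_LdSet_iff]
  -- transforms of the right-hand-side shapes
  have T1 : ∀ x y : ℤ, ((a₁:ℂ) * (x:ℂ) + (a₁:ℂ) * (y:ℂ) * conj z₁) / ((d:ℂ) * (t₁:ℂ))
      = (((a₁:ℚ)/((d:ℚ)*(t₁:ℚ)) : ℚ):ℂ)*(x:ℂ)
        + (((1:ℚ)/(2*(d:ℚ)) : ℚ):ℂ)*(y:ℂ)*((b:ℂ) - sd D₀) := by
    intro x y; rw [hz1c]; push_cast; field_simp
  have T2 : ∀ x y : ℤ, ((a₁:ℂ) * (x:ℂ) + 2 * (a₁:ℂ) * (y:ℂ) * conj z₁) / (2 * (d:ℂ) * (t₁:ℂ))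
      = (((a₁:ℚ)/(2*(d:ℚ)*(t₁:ℚ)) : ℚ):ℂ)*(x:ℂ)
        + (((1:ℚ)/(2*(d:ℚ)) : ℚ):ℂ)*(y:ℂ)*((b:ℂ) - sd D₀) := by
    intro x y; rw [hz1c]; push_cast; field_simp
  have T3 : ∀ x y : ℤ, ((a₁:ℂ) * (x:ℂ) + 2 * (a₁:ℂ) * (y:ℂ) * conj z₁) / (t₁:ℂ)
      = (((a₁:ℚ)/((t₁:ℚ)) : ℚ):ℂ)*(x:ℂ) + (((1:ℚ) : ℚ):ℂ)*(y:ℂ)*((b:ℂ) - sd D₀) := by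
    intro x y; rw [hz1c]; push_cast; field_simp
  have T4 : ∀ x y : ℤ, ((a₁:ℂ) * (x:ℂ) + (a₁:ℂ) * (y:ℂ) * conj z₁) / (t₁:ℂ)
      = (((a₁:ℚ)/((t₁:ℚ)) : ℚ):ℂ)*(x:ℂ) + (((1:ℚ)/2 : ℚ):ℂ)*(y:ℂ)*((b:ℂ) - sd D₀) := by
    intro x y; rw [hz1c]; push_cast; field_simp
  have E1 : (∃ x y : ℤ, lt + l = ((a₁:ℂ) * (x:ℂ) + (a₁:ℂ) * (y:ℂ) * conj z₁) /
        ((d:ℂ) * (t₁:ℂ))) ↔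
      ((∃ k : ℤ, (p + q*(b:ℚ))/((a₁:ℚ)/((d:ℚ)*(t₁:ℚ))) = k) ∧
        (∃ k : ℤ, q/((1:ℚ)/(2*(d:ℚ))) = k)) := by
    simp only [hν, T1]
    exact exists_rep_iff hre him b p q _ _ (div_ne_zero haQ (mul_ne_zero hdQ htQ))
      (div_ne_zero one_ne_zero (mul_ne_zero h2Q hdQ))
  have E2 : (∃ x y : ℤ, lt * conj z₂ + l * z₂ =
        ((a₁:ℂ) * (x:ℂ) + 2 * (a₁:ℂ) * (y:ℂ) * conj z₁) / (2 * (d:ℂ) * (t₁:ℂ))) ↔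
      ((∃ k : ℤ, (u + v*(b:ℚ))/((a₁:ℚ)/(2*(d:ℚ)*(t₁:ℚ))) = k) ∧
        (∃ k : ℤ, v/((1:ℚ)/(2*(d:ℚ))) = k)) := by
    simp only [hμ, T2]
    exact exists_rep_iff hre him b u v _ _
      (div_ne_zero haQ (mul_ne_zero (mul_ne_zero h2Q hdQ) htQ))
      (div_ne_zero one_ne_zero (mul_ne_zero h2Q hdQ))
  have E3 : (∃ x y : ℤ, lt + l = ((a₁:ℂ) * (x:ℂ) + 2 * (a₁:ℂ) * (y:ℂ) * conj z₁) / (t₁:ℂ)) ↔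
      ((∃ k : ℤ, (p + q*(b:ℚ))/((a₁:ℚ)/(t₁:ℚ)) = k) ∧ (∃ k : ℤ, q/((1:ℚ):ℚ) = k)) := by
    simp only [hν, T3]
    exact exists_rep_iff hre him b p q _ _ (div_ne_zero haQ htQ) one_ne_zero
  have E4 : (∃ x y : ℤ, lt * conj z₂ + l * z₂ =
        ((a₁:ℂ) * (x:ℂ) + (a₁:ℂ) * (y:ℂ) * conj z₁) / (t₁:ℂ)) ↔
      ((∃ k : ℤ, (u + v*(b:ℚ))/((a₁:ℚ)/(t₁:ℚ)) = k) ∧ (∃ k : ℤ, v/((1:ℚ)/2 : ℚ) = k)) := by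
    simp only [hμ, T4]
    exact exists_rep_iff hre him b u v _ _ (div_ne_zero haQ htQ)
      (div_ne_zero one_ne_zero h2Q)
  rw [E1, E2, E3, E4]
  -- rational arithmetic identifications
  have R1 : ((p + q*(b:ℚ))/((a₁:ℚ)/((d:ℚ)*(t₁:ℚ))) : ℚ)
      = -((d:ℚ)*(-((t₁:ℚ)*(p+q*(b:ℚ))/(a₁:ℚ)))) := by field_simp
  have R2 : (q/((1:ℚ)/(2*(d:ℚ))) : ℚ) = -((d:ℚ)*(-(2*q))) := by field_simp
  have R3 : ((u + v*(b:ℚ))/((a₁:ℚ)/(2*(d:ℚ)*(t₁:ℚ))) : ℚ)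
      = 2*(d:ℚ)*((t₁:ℚ)*(u+v*(b:ℚ))/(a₁:ℚ)) := by field_simp
  have R4 : (v/((1:ℚ)/(2*(d:ℚ))) : ℚ) = (d:ℚ)*(2*v) := by field_simp
  have R5 : ((p + q*(b:ℚ))/((a₁:ℚ)/(t₁:ℚ)) : ℚ)
      = -(-((t₁:ℚ)*(p+q*(b:ℚ))/(a₁:ℚ))) := by field_simp; try ring
  have R6 : (q/((1:ℚ):ℚ) : ℚ) = q := by norm_num
  have R7 : ((u + v*(b:ℚ))/((a₁:ℚ)/(t₁:ℚ)) : ℚ)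
      = (t₁:ℚ)*(u+v*(b:ℚ))/(a₁:ℚ) := by field_simp; try ring
  have R8 : (v/((1:ℚ)/2 : ℚ) : ℚ) = 2*v := by field_simp; try ring
  rw [exists_int_neg_congr R1, exists_int_neg_congr R2, R3, R4, R5, R6, R7, R8]
  have RC : (∃ k : ℤ, -(-((t₁:ℚ)*(p+q*(b:ℚ))/(a₁:ℚ))) = k)
      ↔ (∃ k : ℤ, (-((t₁:ℚ)*(p+q*(b:ℚ))/(a₁:ℚ))) = k) := exists_int_neg_congr (by ring)
  have RD : (∃ k : ℤ, q = k) ↔ (∃ k : ℤ, (-(2*q) : ℚ) = 2*k) := by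
    constructor <;> rintro ⟨k, hk⟩ <;> exact ⟨-k, by push_cast at hk ⊢; linarith⟩
  rw [RC, RD]
  exact ⟨⟨fun ⟨h1,h2,h3,h4⟩ => ⟨⟨h1,h4⟩,⟨h2,h3⟩⟩, fun ⟨⟨h1,h4⟩,⟨h2,h3⟩⟩ => ⟨h1,h2,h3,h4⟩⟩,
    ⟨fun ⟨h1,h2,h3,h4⟩ => ⟨⟨h1,h4⟩,⟨h2,h3⟩⟩, fun ⟨⟨h1,h4⟩,⟨h2,h3⟩⟩ => ⟨h1,h2,h3,h4⟩⟩⟩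

/-- Equation (2.36) of Proposition 2.9 of the paper. -/
theorem stmt_11 (D₀ : ℤ) (hneg : D₀ < 0) (h8 : D₀ % 8 = 1) (h3 : ¬(3 : ℤ) ∣ D₀)
    (t₁ t₂ a₁ a₂ : ℕ) (ht₁ : 0 < t₁) (ht₂ : 0 < t₂) (ha₁ : 0 < a₁) (ha₂ : 0 < a₂)
    (hcot : Nat.Coprime t₁ t₂) (hcoa : Nat.Coprime a₁ a₂)
    (b : ℤ)
    (hg1 : Int.gcd (a₁ : ℤ) (6 * b * (D₀ * ((t₁ * t₂ : ℕ) : ℤ) ^ 2)) = 1)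
    (hg2 : Int.gcd (a₂ : ℤ) (6 * b * (D₀ * ((t₁ * t₂ : ℕ) : ℤ) ^ 2)) = 1)
    (hb1 : (4 * (a₁ : ℤ)) ∣ b ^ 2 - D₀) (hb2 : (4 * (a₂ : ℤ)) ∣ b ^ 2 - D₀)
    (h48a : 48 ∣ Int.gcd ((a₁ : ℤ) - (t₁ : ℤ)) (b - 1))
    (h48b : 48 ∣ Int.gcd ((a₂ : ℤ) - (t₂ : ℤ)) (b - 1))
    (z₁ z₂ : ℂ)
    (hz₁ : z₁ = (t₁ : ℂ) * ((b : ℂ) + sd D₀) / (2 * (a₁ : ℂ)))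
    (hz₂ : z₂ = (t₂ : ℂ) * ((b : ℂ) + sd D₀) / (2 * (a₂ : ℂ)))
    (d : ℕ) (hd : 0 < d)
    (lt l : ℂ)
    (hlt : ∃ x y : ℚ, lt = (x : ℂ) + (y : ℂ) * sd D₀)
    (hl : ∃ x y : ℚ, l = (x : ℂ) + (y : ℂ) * sd D₀) :
    -- (i) membership in the dual lattice L_d'
    ((iPlus D₀ d z₁ z₂ lt + iMinus D₀ d z₁ z₂ l ∈ LdDualSet d) ↔
      ((∃ x y : ℤ, lt + l = ((a₁ : ℂ) * (x : ℂ) + (a₁ : ℂ) * (y : ℂ) * conj z₁) /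
          ((d : ℂ) * (t₁ : ℂ))) ∧
        (∃ x y : ℤ, lt * conj z₂ + l * z₂ =
          ((a₁ : ℂ) * (x : ℂ) + 2 * (a₁ : ℂ) * (y : ℂ) * conj z₁) /
            (2 * (d : ℂ) * (t₁ : ℂ))))) ∧
    -- (ii) membership in the lattice L_d
    ((iPlus D₀ d z₁ z₂ lt + iMinus D₀ d z₁ z₂ l ∈ LdSet) ↔
      ((∃ x y : ℤ, lt + l = ((a₁ : ℂ) * (x : ℂ) + 2 * (a₁ : ℂ) * (y : ℂ) * conj z₁) /
          (t₁ : ℂ)) ∧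
        (∃ x y : ℤ, lt * conj z₂ + l * z₂ =
          ((a₁ : ℂ) * (x : ℂ) + (a₁ : ℂ) * (y : ℂ) * conj z₁) / (t₁ : ℂ)))) := by
  obtain ⟨xt, yt, hltE⟩ := hlt
  obtain ⟨xl, yl, hlE⟩ := hl
  have hS2 := sd_sq D₀ hneg
  have hconj := sd_conj D₀
  have ha2 : (a₂:ℂ) ≠ 0 := Nat.cast_ne_zero.2 ha₂.ne'
  have hz2 : z₂ = (((t₂:ℚ)*(b:ℚ)/(2*(a₂:ℚ)) : ℚ):ℂ)
      + (((t₂:ℚ)/(2*(a₂:ℚ)) : ℚ):ℂ) * sd D₀ := by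
    rw [hz₂]; push_cast; field_simp
  have hz2c : conj z₂ = (((t₂:ℚ)*(b:ℚ)/(2*(a₂:ℚ)) : ℚ):ℂ)
      - (((t₂:ℚ)/(2*(a₂:ℚ)) : ℚ):ℂ) * sd D₀ := by
    rw [hz2]
    simp [map_add, _root_.map_mul, map_sub, map_ratCast, map_ofNat, map_div₀, hconj]
    ring
  have hν : lt + l = ((xt + xl : ℚ):ℂ) + ((yt + yl : ℚ):ℂ) * sd D₀ := by
    rw [hltE, hlE]; push_cast; ring
  have hμ : lt * conj z₂ + l * z₂ =
      (((xt + xl)*((t₂:ℚ)*(b:ℚ)/(2*(a₂:ℚ))) + (yl - yt)*((t₂:ℚ)/(2*(a₂:ℚ)))*(D₀:ℚ) : ℚ):ℂ)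
      + (((yt + yl)*((t₂:ℚ)*(b:ℚ)/(2*(a₂:ℚ))) + (xl - xt)*((t₂:ℚ)/(2*(a₂:ℚ))) : ℚ):ℂ)
        * sd D₀ := by
    rw [hltE, hlE, hz2c, hz2]
    push_cast
    linear_combination ((yl:ℂ) - (yt:ℂ)) * ((t₂:ℂ)/(2*(a₂:ℂ))) * hS2
  exact key_lemma D₀ hneg t₁ a₁ ht₁ ha₁ b z₁ z₂ hz₁ d hd lt l _ _ _ _ hν hμ
end
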